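/- arXiv:1410.5161 — 2 statements merged into one kernel-verified Lean document; each statement's English description precedes it below -/
import Mathlib

section
/- Let (H, α) be a monoidal Hom-bialgebra with Drinfeld twist σ, and (C, α_C) a left H-Hom-module coalgebra. Define Δ̂_C(c) := σ⁽¹⁾·c₁ ⊗ σ⁽²⁾·c₂. Then (C, Δ̂_C, ε_C) is a (strictly) coassociative counital coalgebra over k: (Δ̂_C ⊗ id)∘Δ̂_C = (id ⊗ Δ̂_C)∘Δ̂_C and (ε_C ⊗ id)∘Δ̂_C = (id ⊗ ε_C)∘Δ̂_C = id. -/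
open TensorProduct

noncomputable section
namespace HomTwist

variable {k : Type*} [CommRing k]

section Defs
variable {H₁ H₂ A B : Type*} [AddCommGroup H₁] [Module k H₁] [AddCommGroup H₂] [Module k H₂]
  [AddCommGroup A] [Module k A] [AddCommGroup B] [Module k B]

/-- The componentwise "action" of `H₁ ⊗ H₂` on `A ⊗ B` induced by bilinear actions
`f : H₁ → A → A` and `g : H₂ → B → B`:  `(h₁ ⊗ h₂) • (a ⊗ b) = (f h₁ a) ⊗ (g h₂ b)`. -/
def pairMap (f : H₁ →ₗ[k] A →ₗ[k] A) (g : H₂ →ₗ[k] B →ₗ[k] B) :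
    (H₁ ⊗[k] H₂) →ₗ[k] (A ⊗[k] B) →ₗ[k] A ⊗[k] B :=
  TensorProduct.lift (((TensorProduct.mapBilinear (RingHom.id k) A B A B).comp f).compl₂ g)

end Defs

section Structures
variable {H : Type*} [AddCommGroup H] [Module k H]

/-- Componentwise product on `H ⊗ H` induced by a bilinear multiplication on `H`. -/
def mulT (mul : H →ₗ[k] H →ₗ[k] H) : (H ⊗[k] H) →ₗ[k] (H ⊗[k] H) →ₗ[k] H ⊗[k] H :=
  pairMap mul mul

/-- Componentwise product on `H ⊗ (H ⊗ H)`. -/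
def mulT3 (mul : H →ₗ[k] H →ₗ[k] H) :
    (H ⊗[k] (H ⊗[k] H)) →ₗ[k] (H ⊗[k] (H ⊗[k] H)) →ₗ[k] H ⊗[k] (H ⊗[k] H) :=
  pairMap mul (mulT mul)

/-- `(r ⊗ R) ↦ r⁽¹⁾ ⊗ (R⁽¹⁾ ⊗ r⁽²⁾R⁽²⁾)`. -/
def hexA (mul : H →ₗ[k] H →ₗ[k] H) :
    ((H ⊗[k] H) ⊗[k] (H ⊗[k] H)) →ₗ[k] H ⊗[k] (H ⊗[k] H) :=
  (TensorProduct.assoc k H H H).toLinearMap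
    ∘ₗ TensorProduct.map LinearMap.id (TensorProduct.lift mul)
    ∘ₗ (TensorProduct.tensorTensorTensorComm k H H H H).toLinearMap

/-- `(r ⊗ R) ↦ r⁽¹⁾R⁽¹⁾ ⊗ (R⁽²⁾ ⊗ r⁽²⁾)`. -/
def hexB (mul : H →ₗ[k] H →ₗ[k] H) :
    ((H ⊗[k] H) ⊗[k] (H ⊗[k] H)) →ₗ[k] H ⊗[k] (H ⊗[k] H) :=
  TensorProduct.map (TensorProduct.lift mul) (TensorProduct.comm k H H).toLinearMap
    ∘ₗ (TensorProduct.tensorTensorTensorComm k H H H H).toLinearMap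

/-- Axioms of a monoidal Hom-bialgebra (Caenepeel–Goyvaerts). -/
structure IsMonHomBialgebra (mul : H →ₗ[k] H →ₗ[k] H) (one : H) (alpha : H ≃ₗ[k] H)
    (comul : H →ₗ[k] H ⊗[k] H) (counit : H →ₗ[k] k) : Prop where
  alpha_mul : ∀ a b, alpha (mul a b) = mul (alpha a) (alpha b)
  hom_assoc : ∀ a b c, mul (alpha a) (mul b c) = mul (mul a b) (alpha c)
  alpha_one : alpha one = one
  one_mul' : ∀ a, mul one a = alpha a
  mul_one' : ∀ a, mul a one = alpha a
  comul_alpha : ∀ c, comul (alpha c)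
      = TensorProduct.map alpha.toLinearMap alpha.toLinearMap (comul c)
  hom_coassoc : ∀ c,
      TensorProduct.map alpha.symm.toLinearMap comul (comul c)
        = TensorProduct.assoc k H H H
            (TensorProduct.map comul alpha.symm.toLinearMap (comul c))
  counit_alpha : ∀ c, counit (alpha c) = counit c
  counit_id : ∀ c, TensorProduct.lid k H
      (TensorProduct.map counit LinearMap.id (comul c)) = alpha.symm c
  id_counit : ∀ c, TensorProduct.rid k H
      (TensorProduct.map LinearMap.id counit (comul c)) = alpha.symm c
  comul_mul : ∀ a b, comul (mul a b) = mulT mul (comul a) (comul b)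
  comul_one : comul one = one ⊗ₜ[k] one
  counit_mul : ∀ a b, counit (mul a b) = counit a * counit b
  counit_one : counit one = 1

/-- Axioms of a (Makhlouf–Silvestrov) Hom-bialgebra (with bijective structure map). -/
structure IsHomBialgebra (mul : H →ₗ[k] H →ₗ[k] H) (one : H) (alpha : H ≃ₗ[k] H)
    (comul : H →ₗ[k] H ⊗[k] H) (counit : H →ₗ[k] k) : Prop where
  alpha_mul : ∀ a b, alpha (mul a b) = mul (alpha a) (alpha b)
  hom_assoc : ∀ a b c, mul (alpha a) (mul b c) = mul (mul a b) (alpha c)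
  alpha_one : alpha one = one
  one_mul' : ∀ a, mul one a = alpha a
  mul_one' : ∀ a, mul a one = alpha a
  comul_alpha : ∀ c, comul (alpha c)
      = TensorProduct.map alpha.toLinearMap alpha.toLinearMap (comul c)
  hom_coassoc : ∀ c,
      TensorProduct.map alpha.toLinearMap comul (comul c)
        = TensorProduct.assoc k H H H
            (TensorProduct.map comul alpha.toLinearMap (comul c))
  counit_alpha : ∀ c, counit (alpha c) = counit c
  counit_id : ∀ c, TensorProduct.lid k H
      (TensorProduct.map counit LinearMap.id (comul c)) = alpha c
  id_counit : ∀ c, TensorProduct.rid k H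
      (TensorProduct.map LinearMap.id counit (comul c)) = alpha c
  comul_mul : ∀ a b, comul (mul a b) = mulT mul (comul a) (comul b)
  comul_one : comul one = one ⊗ₜ[k] one
  counit_mul : ∀ a b, counit (mul a b) = counit a * counit b
  counit_one : counit one = 1

/-- Axioms of an ordinary (possibly noncommutative) bialgebra, given by raw data. -/
structure IsBialgebra (mul : H →ₗ[k] H →ₗ[k] H) (one : H)
    (comul : H →ₗ[k] H ⊗[k] H) (counit : H →ₗ[k] k) : Prop where
  assoc : ∀ a b c, mul (mul a b) c = mul a (mul b c)
  one_mul' : ∀ a, mul one a = a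
  mul_one' : ∀ a, mul a one = a
  coassoc : ∀ c, TensorProduct.map LinearMap.id comul (comul c)
      = TensorProduct.assoc k H H H (TensorProduct.map comul LinearMap.id (comul c))
  counit_id : ∀ c, TensorProduct.lid k H
      (TensorProduct.map counit LinearMap.id (comul c)) = c
  id_counit : ∀ c, TensorProduct.rid k H
      (TensorProduct.map LinearMap.id counit (comul c)) = c
  comul_mul : ∀ a b, comul (mul a b) = mulT mul (comul a) (comul b)
  comul_one : comul one = one ⊗ₜ[k] one
  counit_mul : ∀ a b, counit (mul a b) = counit a * counit b
  counit_one : counit one = 1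

/-- A Drinfeld twist `σ` (with inverse `ϱ`) for a monoidal Hom-bialgebra. -/
structure IsTwist (mul : H →ₗ[k] H →ₗ[k] H) (one : H) (alpha : H ≃ₗ[k] H)
    (comul : H →ₗ[k] H ⊗[k] H) (counit : H →ₗ[k] k) (σ ϱ : H ⊗[k] H) : Prop where
  mul_inv : mulT mul σ ϱ = one ⊗ₜ[k] one
  inv_mul : mulT mul ϱ σ = one ⊗ₜ[k] one
  T1 : TensorProduct.map alpha.toLinearMap alpha.toLinearMap σ = σ
  T2l : TensorProduct.lid k H (TensorProduct.map counit LinearMap.id σ) = one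
  T2r : TensorProduct.rid k H (TensorProduct.map LinearMap.id counit σ) = one
  T3 : TensorProduct.map LinearMap.id (mulT mul σ)
        (TensorProduct.map LinearMap.id comul σ)
      = TensorProduct.assoc k H H H
          (TensorProduct.map (mulT mul σ) LinearMap.id
            (TensorProduct.map comul LinearMap.id σ))

/-- The `R`-matrix axioms (Q1)–(Q4) for a monoidal Hom-bialgebra. -/
structure IsRMatrix (mul : H →ₗ[k] H →ₗ[k] H) (alpha : H ≃ₗ[k] H)
    (comul : H →ₗ[k] H ⊗[k] H) (R : H ⊗[k] H) : Prop where
  Q1 : TensorProduct.map alpha.toLinearMap alpha.toLinearMap R = R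
  Q2 : ∀ h, mulT mul R (comul h)
      = mulT mul (TensorProduct.comm k H H (comul h)) R
  Q3 : TensorProduct.assoc k H H H (TensorProduct.map comul LinearMap.id R)
      = hexA mul (R ⊗ₜ[k] R)
  Q4 : TensorProduct.map LinearMap.id comul R = hexB mul (R ⊗ₜ[k] R)

/-- Axioms of a monoidal Hom-algebra. -/
structure IsMonHomAlgebra {A : Type*} [AddCommGroup A] [Module k A]
    (mul : A →ₗ[k] A →ₗ[k] A) (one : A) (alpha : A ≃ₗ[k] A) : Prop where
  alpha_mul : ∀ a b, alpha (mul a b) = mul (alpha a) (alpha b)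
  hom_assoc : ∀ a b c, mul (alpha a) (mul b c) = mul (mul a b) (alpha c)
  alpha_one : alpha one = one
  one_mul' : ∀ a, mul one a = alpha a
  mul_one' : ∀ a, mul a one = alpha a

/-- Axioms of a monoidal Hom-coalgebra. -/
structure IsMonHomCoalgebra {C : Type*} [AddCommGroup C] [Module k C]
    (comul : C →ₗ[k] C ⊗[k] C) (counit : C →ₗ[k] k) (alpha : C ≃ₗ[k] C) : Prop where
  comul_alpha : ∀ c, comul (alpha c)
      = TensorProduct.map alpha.toLinearMap alpha.toLinearMap (comul c)
  hom_coassoc : ∀ c,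
      TensorProduct.map alpha.symm.toLinearMap comul (comul c)
        = TensorProduct.assoc k C C C
            (TensorProduct.map comul alpha.symm.toLinearMap (comul c))
  counit_alpha : ∀ c, counit (alpha c) = counit c
  counit_id : ∀ c, TensorProduct.lid k C
      (TensorProduct.map counit LinearMap.id (comul c)) = alpha.symm c
  id_counit : ∀ c, TensorProduct.rid k C
      (TensorProduct.map LinearMap.id counit (comul c)) = alpha.symm c

/-- Axioms of a left `H`-Hom-module. -/
structure IsHomModule {M : Type*} [AddCommGroup M] [Module k M]
    (mul : H →ₗ[k] H →ₗ[k] H) (one : H) (alpha : H ≃ₗ[k] H)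
    (alM : M ≃ₗ[k] M) (act : H →ₗ[k] M →ₗ[k] M) : Prop where
  compat : ∀ h m, alM (act h m) = act (alpha h) (alM m)
  hom_smul : ∀ h h' m, act (alpha h) (act h' m) = act (mul h h') (alM m)
  one_smul' : ∀ m, act one m = alM m

/-- The twisted coproduct `Δᵠ(x) = (σ Δ(x)) ϱ`. -/
def twistComul (mul : H →ₗ[k] H →ₗ[k] H) (comul : H →ₗ[k] H ⊗[k] H)
    (σ ϱ : H ⊗[k] H) : H →ₗ[k] H ⊗[k] H :=
  ((mulT mul).flip ϱ) ∘ₗ (mulT mul σ) ∘ₗ comul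

end Structures
end HomTwist
end

/-! The twisted coproduct `Δ̂ = σ · Δ_C` satisfies `Δ̂(h·c) = (σ Δh) · Δ_C(α_C c)`: `σ` is
`α`-invariant and `C ⊗ C` is a Hom-module over `H ⊗ H`. Hence applying `Δ̂` to the right
(left) factor of `Δ̂ c` produces the action of `(id ⊗ σΔ)σ` on `(id ⊗ Δ_C α_C)Δ_C c`
(resp. of `(σΔ ⊗ id)σ` on `(Δ_C α_C ⊗ id)Δ_C c`), and the two agree up to reassociation by
the cocycle condition on `σ` and the Hom-coassociativity of `C`. Counitality holds because
`(ε ⊗ id)σ = 1`, `(ε_C ⊗ id)Δ_C = α_C⁻¹` and `1` acts as `α_C`. -/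

namespace HomTwist
open TensorProduct

section PairMap
variable {k H₁ H₂ H₃ H₁' H₂' A B D A' B' : Type*} [CommRing k]
  [AddCommGroup H₁] [Module k H₁] [AddCommGroup H₂] [Module k H₂] [AddCommGroup H₃] [Module k H₃]
  [AddCommGroup H₁'] [Module k H₁'] [AddCommGroup H₂'] [Module k H₂']
  [AddCommGroup A] [Module k A] [AddCommGroup B] [Module k B] [AddCommGroup D] [Module k D]
  [AddCommGroup A'] [Module k A'] [AddCommGroup B'] [Module k B']

@[simp]
lemma pairMap_tmul (f : H₁ →ₗ[k] A →ₗ[k] A) (g : H₂ →ₗ[k] B →ₗ[k] B) (h₁ : H₁) (h₂ : H₂) :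
    pairMap f g (h₁ ⊗ₜ h₂) = map (f h₁) (g h₂) := by
  simp [pairMap]

lemma map_pairMap {f : H₁ →ₗ[k] A →ₗ[k] A} {g : H₂ →ₗ[k] B →ₗ[k] B}
    {f' : H₁' →ₗ[k] A' →ₗ[k] A'} {g' : H₂' →ₗ[k] B' →ₗ[k] B'}
    {φA χA : A →ₗ[k] A'} {φB χB : B →ₗ[k] B'} {ψ₁ : H₁ →ₗ[k] H₁'} {ψ₂ : H₂ →ₗ[k] H₂'}
    (hA : ∀ h a, φA (f h a) = f' (ψ₁ h) (χA a)) (hB : ∀ h b, φB (g h b) = g' (ψ₂ h) (χB b))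
    (s : H₁ ⊗[k] H₂) (d : A ⊗[k] B) :
    map φA φB (pairMap f g s d) = pairMap f' g' (map ψ₁ ψ₂ s) (map χA χB d) := by
  induction s using TensorProduct.induction_on with
  | zero => simp
  | add s₁ s₂ ih₁ ih₂ => simp only [map_add, LinearMap.add_apply, ih₁, ih₂]
  | tmul h₁ h₂ =>
    induction d using TensorProduct.induction_on with
    | zero => simp
    | add d₁ d₂ ih₁ ih₂ => simp only [map_add, ih₁, ih₂]
    | tmul a b => simp [hA, hB]

lemma assoc_pairMap (f : H₁ →ₗ[k] A →ₗ[k] A) (g : H₂ →ₗ[k] B →ₗ[k] B)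
    (e : H₃ →ₗ[k] D →ₗ[k] D) (t : (H₁ ⊗[k] H₂) ⊗[k] H₃) (u : (A ⊗[k] B) ⊗[k] D) :
    TensorProduct.assoc k A B D (pairMap (pairMap f g) e t u)
      = pairMap f (pairMap g e) (TensorProduct.assoc k H₁ H₂ H₃ t)
          (TensorProduct.assoc k A B D u) := by
  induction t using TensorProduct.induction_on with
  | zero => simp
  | add t₁ t₂ ih₁ ih₂ => simp only [map_add, LinearMap.add_apply, ih₁, ih₂]
  | tmul h h₃ =>
    induction h using TensorProduct.induction_on with
    | zero => simp
    | add h h' ih₁ ih₂ => simp only [add_tmul, map_add, LinearMap.add_apply, ih₁, ih₂]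
    | tmul h₁ h₂ => simpa using (map_map_assoc _ _ _ u).symm

lemma lid_map_pairMap {f : H₁ →ₗ[k] A →ₗ[k] A} {ε : H₁ →ₗ[k] k} {εA : A →ₗ[k] k}
    (hε : ∀ h a, εA (f h a) = ε h * εA a) (g : H₂ →ₗ[k] B →ₗ[k] B)
    (s : H₁ ⊗[k] H₂) (d : A ⊗[k] B) :
    TensorProduct.lid k B (map εA LinearMap.id (pairMap f g s d))
      = g (TensorProduct.lid k H₂ (map ε LinearMap.id s))
          (TensorProduct.lid k B (map εA LinearMap.id d)) := by
  induction s using TensorProduct.induction_on with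
  | zero => simp
  | add s₁ s₂ ih₁ ih₂ => simp only [map_add, LinearMap.add_apply, ih₁, ih₂]
  | tmul h₁ h₂ =>
    induction d using TensorProduct.induction_on with
    | zero => simp
    | add d₁ d₂ ih₁ ih₂ => simp only [map_add, ih₁, ih₂]
    | tmul a b => simp [hε, mul_smul, smul_comm (ε _)]

lemma rid_map_pairMap (f : H₁ →ₗ[k] A →ₗ[k] A) {g : H₂ →ₗ[k] B →ₗ[k] B} {ε : H₂ →ₗ[k] k}
    {εB : B →ₗ[k] k} (hε : ∀ h b, εB (g h b) = ε h * εB b)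
    (s : H₁ ⊗[k] H₂) (d : A ⊗[k] B) :
    TensorProduct.rid k A (map LinearMap.id εB (pairMap f g s d))
      = f (TensorProduct.rid k H₁ (map LinearMap.id ε s))
          (TensorProduct.rid k A (map LinearMap.id εB d)) := by
  induction s using TensorProduct.induction_on with
  | zero => simp
  | add s₁ s₂ ih₁ ih₂ => simp only [map_add, LinearMap.add_apply, ih₁, ih₂]
  | tmul h₁ h₂ =>
    induction d using TensorProduct.induction_on with
    | zero => simp
    | add d₁ d₂ ih₁ ih₂ => simp only [map_add, ih₁, ih₂]
    | tmul a b => simp [hε, mul_smul, smul_comm (ε _)]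

end PairMap

section HomStructures
variable {k H M N : Type*} [CommRing k] [AddCommGroup H] [Module k H]
  [AddCommGroup M] [Module k M] [AddCommGroup N] [Module k N]

lemma pairMap_hom_smul {mul : H →ₗ[k] H →ₗ[k] H} {one : H} {alpha : H ≃ₗ[k] H}
    {αM : M ≃ₗ[k] M} {αN : N ≃ₗ[k] N} {f : H →ₗ[k] M →ₗ[k] M} {g : H →ₗ[k] N →ₗ[k] N}
    (hf : IsHomModule mul one alpha αM f) (hg : IsHomModule mul one alpha αN g)
    (s t : H ⊗[k] H) (d : M ⊗[k] N) :
    pairMap f g (map alpha.toLinearMap alpha.toLinearMap s) (pairMap f g t d)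
      = pairMap f g (mulT mul s t) (map αM.toLinearMap αN.toLinearMap d) := by
  induction s using TensorProduct.induction_on with
  | zero => simp
  | add s₁ s₂ ih₁ ih₂ => simp only [map_add, LinearMap.add_apply, ih₁, ih₂]
  | tmul h₁ h₂ =>
    induction t using TensorProduct.induction_on with
    | zero => simp
    | add t₁ t₂ ih₁ ih₂ => simp only [map_add, LinearMap.add_apply, ih₁, ih₂]
    | tmul g₁ g₂ =>
      induction d using TensorProduct.induction_on with
      | zero => simp
      | add d₁ d₂ ih₁ ih₂ => simp only [map_add, ih₁, ih₂]
      | tmul m n => simp [mulT, hf.hom_smul, hg.hom_smul]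

lemma IsMonHomCoalgebra.coassoc_comp_alpha {comul : M →ₗ[k] M ⊗[k] M} {counit : M →ₗ[k] k}
    {alpha : M ≃ₗ[k] M} (hM : IsMonHomCoalgebra comul counit alpha) (c : M) :
    map LinearMap.id (comul ∘ₗ alpha.toLinearMap) (comul c)
      = TensorProduct.assoc k M M M (map (comul ∘ₗ alpha.toLinearMap) LinearMap.id (comul c)) := by
  have comul_alpha : map alpha.toLinearMap alpha.toLinearMap ∘ₗ comul
      = comul ∘ₗ alpha.toLinearMap := LinearMap.ext fun x => (hM.comul_alpha x).symm
  have h := congrArg (map alpha.toLinearMap (map alpha.toLinearMap alpha.toLinearMap))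
    (hM.hom_coassoc c)
  rwa [map_map, map_map_assoc, map_map, comul_alpha, alpha.comp_symm] at h

lemma IsTwist.cocycle {mul : H →ₗ[k] H →ₗ[k] H} {one : H} {alpha : H ≃ₗ[k] H}
    {comul : H →ₗ[k] H ⊗[k] H} {counit : H →ₗ[k] k} {σ ϱ : H ⊗[k] H}
    (hσ : IsTwist mul one alpha comul counit σ ϱ) :
    map LinearMap.id (mulT mul σ ∘ₗ comul) σ
      = TensorProduct.assoc k H H H (map (mulT mul σ ∘ₗ comul) LinearMap.id σ) := by
  simpa only [map_map, LinearMap.id_comp] using hσ.T3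

lemma comul_twist_act {mul : H →ₗ[k] H →ₗ[k] H} {one : H} {alpha : H ≃ₗ[k] H}
    {comul : H →ₗ[k] H ⊗[k] H} {σ : H ⊗[k] H}
    {comulC : M →ₗ[k] M ⊗[k] M} {counitC : M →ₗ[k] k} {alC : M ≃ₗ[k] M}
    {act : H →ₗ[k] M →ₗ[k] M} (hσ : map alpha.toLinearMap alpha.toLinearMap σ = σ)
    (hC : IsMonHomCoalgebra comulC counitC alC) (hmod : IsHomModule mul one alpha alC act)
    (hmc : ∀ h c, comulC (act h c) = pairMap act act (comul h) (comulC c)) (h : H) (c : M) :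
    pairMap act act σ (comulC (act h c))
      = pairMap act act (mulT mul σ (comul h)) (comulC (alC c)) := by
  rw [hmc, hC.comul_alpha, ← pairMap_hom_smul hmod hmod, hσ]

end HomStructures

theorem module_coalgebra_twist_general
    {k H C : Type*} [CommRing k] [AddCommGroup H] [Module k H]
    [AddCommGroup C] [Module k C]
    (mul : H →ₗ[k] H →ₗ[k] H) (one : H) (alpha : H ≃ₗ[k] H)
    (comul : H →ₗ[k] H ⊗[k] H) (counit : H →ₗ[k] k) (σ ϱ : H ⊗[k] H)
    (hσ : IsTwist mul one alpha comul counit σ ϱ)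
    (comulC : C →ₗ[k] C ⊗[k] C) (counitC : C →ₗ[k] k) (alC : C ≃ₗ[k] C)
    (act : H →ₗ[k] C →ₗ[k] C)
    (hC : IsMonHomCoalgebra comulC counitC alC)
    (hmod : IsHomModule mul one alpha alC act)
    -- module-coalgebra compatibility: `Δ_C(h·c) = h₁·c₁ ⊗ h₂·c₂`, `ε_C(h·c) = ε(h)ε_C(c)`:
    (hmc₁ : ∀ h c, comulC (act h c) = pairMap act act (comul h) (comulC c))
    (hmc₂ : ∀ h c, counitC (act h c) = counit h * counitC c) :
    (∀ c, TensorProduct.map LinearMap.id ((pairMap act act σ) ∘ₗ comulC)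
        (((pairMap act act σ) ∘ₗ comulC) c)
      = TensorProduct.assoc k C C C
          (TensorProduct.map ((pairMap act act σ) ∘ₗ comulC) LinearMap.id
            (((pairMap act act σ) ∘ₗ comulC) c)))
    ∧ (∀ c, TensorProduct.lid k C (TensorProduct.map counitC LinearMap.id
        (((pairMap act act σ) ∘ₗ comulC) c)) = c)
    ∧ (∀ c, TensorProduct.rid k C (TensorProduct.map LinearMap.id counitC
        (((pairMap act act σ) ∘ₗ comulC) c)) = c) := by
  have twist_act : ∀ h c, (pairMap act act σ ∘ₗ comulC) (act h c)
      = pairMap act act ((mulT mul σ ∘ₗ comul) h) ((comulC ∘ₗ alC.toLinearMap) c) :=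
    comul_twist_act hσ.T1 hC hmod hmc₁
  have id_act : ∀ (h : H) (c : C),
      LinearMap.id (R := k) (act h c) = act (LinearMap.id (R := k) h) (LinearMap.id (R := k) c) :=
    fun _ _ => rfl
  refine ⟨fun c => ?_, fun c => ?_, fun c => ?_⟩
  · calc _ = pairMap act (pairMap act act) (map LinearMap.id (mulT mul σ ∘ₗ comul) σ)
          (map LinearMap.id (comulC ∘ₗ alC.toLinearMap) (comulC c)) :=
          map_pairMap id_act twist_act _ _
      _ = TensorProduct.assoc k C C C (pairMap (pairMap act act) act
          (map (mulT mul σ ∘ₗ comul) LinearMap.id σ)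
          (map (comulC ∘ₗ alC.toLinearMap) LinearMap.id (comulC c))) := by
        rw [hσ.cocycle, hC.coassoc_comp_alpha, assoc_pairMap]
      _ = _ := by rw [LinearMap.comp_apply, map_pairMap twist_act id_act]
  · rw [LinearMap.comp_apply, lid_map_pairMap hmc₂, hσ.T2l, hC.counit_id, hmod.one_smul',
      alC.apply_symm_apply]
  · rw [LinearMap.comp_apply, rid_map_pairMap act hmc₂, hσ.T2r, hC.id_counit, hmod.one_smul',
      alC.apply_symm_apply]

/-- (Proposition 4.4(2)) Twisting the coproduct of an
`H`-Hom-module coalgebra `C` by a Drinfeld twist `σ`,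
`Δ̂(c) = σ⁽¹⁾·c₁ ⊗ σ⁽²⁾·c₂`, yields a strictly coassociative counital coalgebra. -/
theorem module_coalgebra_twist
    {k H C : Type*} [CommRing k] [AddCommGroup H] [Module k H]
    [AddCommGroup C] [Module k C]
    (mul : H →ₗ[k] H →ₗ[k] H) (one : H) (alpha : H ≃ₗ[k] H)
    (comul : H →ₗ[k] H ⊗[k] H) (counit : H →ₗ[k] k) (σ ϱ : H ⊗[k] H)
    (hH : IsMonHomBialgebra mul one alpha comul counit)
    (hσ : IsTwist mul one alpha comul counit σ ϱ)
    (comulC : C →ₗ[k] C ⊗[k] C) (counitC : C →ₗ[k] k) (alC : C ≃ₗ[k] C)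
    (act : H →ₗ[k] C →ₗ[k] C)
    (hC : IsMonHomCoalgebra comulC counitC alC)
    (hmod : IsHomModule mul one alpha alC act)
    -- module-coalgebra compatibility: `Δ_C(h·c) = h₁·c₁ ⊗ h₂·c₂`, `ε_C(h·c) = ε(h)ε_C(c)`:
    (hmc₁ : ∀ h c, comulC (act h c) = pairMap act act (comul h) (comulC c))
    (hmc₂ : ∀ h c, counitC (act h c) = counit h * counitC c) :
    (∀ c, TensorProduct.map LinearMap.id ((pairMap act act σ) ∘ₗ comulC)
        (((pairMap act act σ) ∘ₗ comulC) c)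
      = TensorProduct.assoc k C C C
          (TensorProduct.map ((pairMap act act σ) ∘ₗ comulC) LinearMap.id
            (((pairMap act act σ) ∘ₗ comulC) c)))
    ∧ (∀ c, TensorProduct.lid k C (TensorProduct.map counitC LinearMap.id
        (((pairMap act act σ) ∘ₗ comulC) c)) = c)
    ∧ (∀ c, TensorProduct.rid k C (TensorProduct.map LinearMap.id counitC
        (((pairMap act act σ) ∘ₗ comulC) c)) = c) :=
  module_coalgebra_twist_general mul one alpha comul counit σ ϱ hσ comulC counitC alC act hC hmod
    hmc₁ hmc₂

end HomTwist
end

section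
/- Let (H, α) be a monoidal Hom-bialgebra with Drinfeld twist σ and inverse ϱ. Define Δᵠ(x) := (σΔ(x))ϱ for x ∈ H (product in H⊗H componentwise). Then Δᵠ is a Hom-algebra map preserving the unit: Δᵠ(xy) = Δᵠ(x)Δᵠ(y), Δᵠ(1_H) = 1_H⊗1_H, and Δᵠ∘α = (α⊗α)∘Δᵠ. -/
open TensorProduct

/-! `H ⊗ H` with the componentwise product is again a monoidal Hom-algebra, with structure
map `α ⊗ α`, and `Δ` is a unital Hom-algebra map into it. Since `Δᵠ` is `Δ` followed by
`t ↦ (σ t) ϱ`, it suffices that conjugation by an `α`-invariant unit of a monoidal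
Hom-algebra is a unital Hom-algebra map; the inverse `ϱ` is automatically `α`-invariant,
and `σ t ϱ · σ t' ϱ = σ t t' ϱ` follows from hom-associativity once `ϱ σ = 1`. -/

namespace HomTwist
open TensorProduct

section TensorSquare
variable {k H : Type*} [CommRing k] [AddCommGroup H] [Module k H]

@[simp]
lemma mulT_tmul (mul : H →ₗ[k] H →ₗ[k] H) (a b c d : H) :
    mulT mul (a ⊗ₜ[k] b) (c ⊗ₜ[k] d) = mul a c ⊗ₜ[k] mul b d := by
  simp [mulT, pairMap]

lemma map_mulT (mul : H →ₗ[k] H →ₗ[k] H) (f : H →ₗ[k] H)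
    (hf : ∀ a b, f (mul a b) = mul (f a) (f b)) (s t : H ⊗[k] H) :
    map f f (mulT mul s t) = mulT mul (map f f s) (map f f t) := by
  induction s using TensorProduct.induction_on with
  | zero => simp
  | add s s' hs hs' => simp only [map_add, LinearMap.add_apply, hs, hs']
  | tmul a b =>
    induction t using TensorProduct.induction_on with
    | zero => simp
    | add t t' ht ht' => simp only [map_add, ht, ht']
    | tmul c d => simp [hf]

lemma mulT_hom_assoc (mul : H →ₗ[k] H →ₗ[k] H) (alpha : H ≃ₗ[k] H)
    (hassoc : ∀ a b c, mul (alpha a) (mul b c) = mul (mul a b) (alpha c))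
    (s t u : H ⊗[k] H) :
    mulT mul (TensorProduct.congr alpha alpha s) (mulT mul t u)
      = mulT mul (mulT mul s t) (TensorProduct.congr alpha alpha u) := by
  induction s using TensorProduct.induction_on with
  | zero => simp
  | add s s' hs hs' => simp only [map_add, LinearMap.add_apply, hs, hs']
  | tmul a b =>
    induction t using TensorProduct.induction_on with
    | zero => simp
    | add t t' ht ht' => simp only [map_add, LinearMap.add_apply, ht, ht']
    | tmul c d =>
      induction u using TensorProduct.induction_on with
      | zero => simp
      | add u u' hu hu' => simp only [map_add, hu, hu']
      | tmul e f => simp [hassoc]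

lemma IsMonHomAlgebra.tensorSquare {mul : H →ₗ[k] H →ₗ[k] H} {one : H} {alpha : H ≃ₗ[k] H}
    (hH : IsMonHomAlgebra mul one alpha) :
    IsMonHomAlgebra (mulT mul) (one ⊗ₜ[k] one) (TensorProduct.congr alpha alpha) where
  alpha_mul s t := by
    simpa only [← LinearEquiv.coe_toLinearMap, toLinearMap_congr] using
      map_mulT mul alpha.toLinearMap hH.alpha_mul s t
  hom_assoc := mulT_hom_assoc mul alpha hH.hom_assoc
  alpha_one := by simp [hH.alpha_one]
  one_mul' t := by
    induction t using TensorProduct.induction_on with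
    | zero => simp
    | add t t' ht ht' => simp only [map_add, ht, ht']
    | tmul a b => simp [hH.one_mul']
  mul_one' t := by
    induction t using TensorProduct.induction_on with
    | zero => simp
    | add t t' ht ht' => simp only [map_add, LinearMap.add_apply, ht, ht']
    | tmul a b => simp [hH.mul_one']

lemma IsMonHomBialgebra.toIsMonHomAlgebra {mul : H →ₗ[k] H →ₗ[k] H} {one : H}
    {alpha : H ≃ₗ[k] H} {comul : H →ₗ[k] H ⊗[k] H} {counit : H →ₗ[k] k}
    (hH : IsMonHomBialgebra mul one alpha comul counit) : IsMonHomAlgebra mul one alpha :=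
  ⟨hH.alpha_mul, hH.hom_assoc, hH.alpha_one, hH.one_mul', hH.mul_one'⟩

end TensorSquare

namespace IsMonHomAlgebra
variable {k A : Type*} [CommRing k] [AddCommGroup A] [Module k A]
  {mul : A →ₗ[k] A →ₗ[k] A} {one : A} {alpha : A ≃ₗ[k] A} {u v : A}

lemma alpha_inv_eq_self (hA : IsMonHomAlgebra mul one alpha) (hu : alpha u = u)
    (huv : mul u v = one) (hvu : mul v u = one) : alpha v = v := by
  have hu_av : mul u (alpha v) = one := by
    rw [← hu, ← hA.alpha_mul, huv, hA.alpha_one]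
  have h : alpha (alpha v) = alpha (alpha (alpha v)) := by
    calc alpha (alpha v) = mul (alpha v) (mul u (alpha v)) := by rw [hu_av, hA.mul_one']
      _ = alpha (alpha (alpha v)) := by rw [hA.hom_assoc, hvu, hA.one_mul']
  exact (alpha.injective (alpha.injective h)).symm

lemma conj_one (hA : IsMonHomAlgebra mul one alpha) (hu : alpha u = u)
    (huv : mul u v = one) : mul (mul u one) v = one := by
  rw [hA.mul_one', hu, huv]

lemma conj_alpha (hA : IsMonHomAlgebra mul one alpha) (hu : alpha u = u) (hv : alpha v = v)
    (x : A) : mul (mul u (alpha x)) v = alpha (mul (mul u x) v) := by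
  rw [hA.alpha_mul, hA.alpha_mul, hu, hv]

lemma conj_mul (hA : IsMonHomAlgebra mul one alpha) (hu : alpha u = u) (hv : alpha v = v)
    (hvu : mul v u = one) (x y : A) :
    mul (mul u (mul x y)) v = mul (mul (mul u x) v) (mul (mul u y) v) := by
  -- Writing `y = α y'` lets hom-associativity move `v` next to `u`.
  obtain ⟨y', rfl⟩ : ∃ y', alpha y' = y := ⟨alpha.symm y, alpha.apply_symm_apply y⟩
  have hcancel : mul v (mul (mul u y') v) = mul (alpha (alpha y')) v := by
    calc mul v (mul (mul u y') v)
        = mul (mul v (mul u y')) (alpha v) := by rw [← hA.hom_assoc, hv]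
      _ = mul (mul (mul v u) (alpha y')) v := by rw [hv, ← hA.hom_assoc, hv]
      _ = mul (alpha (alpha y')) v := by rw [hvu, hA.one_mul']
  calc mul (mul u (mul x (alpha y'))) v
      = mul (mul (mul u x) (alpha (alpha y'))) (alpha v) := by rw [hv, ← hA.hom_assoc, hu]
    _ = mul (alpha (mul u x)) (mul v (mul (mul u y') v)) := by rw [hcancel, hA.hom_assoc]
    _ = mul (mul (mul u x) v) (mul (mul u (alpha y')) v) := by
      rw [hA.hom_assoc, conj_alpha hA hu hv]

end IsMonHomAlgebra

/-- (Lemma 4.5) The twisted coproduct `Δᵠ(x) = (σΔ(x))ϱ` is a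
Hom-algebra map preserving the unit. -/
theorem twisted_comul_is_algebra_map
    {k H : Type*} [CommRing k] [AddCommGroup H] [Module k H]
    (mul : H →ₗ[k] H →ₗ[k] H) (one : H) (alpha : H ≃ₗ[k] H)
    (comul : H →ₗ[k] H ⊗[k] H) (counit : H →ₗ[k] k) (σ ϱ : H ⊗[k] H)
    (hH : IsMonHomBialgebra mul one alpha comul counit)
    (hσ : IsTwist mul one alpha comul counit σ ϱ) :
    (∀ x y, twistComul mul comul σ ϱ (mul x y)
        = mulT mul (twistComul mul comul σ ϱ x) (twistComul mul comul σ ϱ y))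
    ∧ twistComul mul comul σ ϱ one = one ⊗ₜ[k] one
    ∧ (∀ x, twistComul mul comul σ ϱ (alpha x)
        = TensorProduct.map alpha.toLinearMap alpha.toLinearMap
            (twistComul mul comul σ ϱ x)) := by
  have hT := hH.toIsMonHomAlgebra.tensorSquare
  have hσα : TensorProduct.congr alpha alpha σ = σ := hσ.T1
  have hϱα := hT.alpha_inv_eq_self hσα hσ.mul_inv hσ.inv_mul
  have hD : ∀ x, twistComul mul comul σ ϱ x = mulT mul (mulT mul σ (comul x)) ϱ :=
    fun x => rfl
  refine ⟨fun x y => ?_, ?_, fun x => ?_⟩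
  · rw [hD, hD, hD, hH.comul_mul, hT.conj_mul hσα hϱα hσ.inv_mul]
  · rw [hD, hH.comul_one, hT.conj_one hσα hσ.mul_inv]
  · rw [hD, hD, hH.comul_alpha]
    exact hT.conj_alpha hσα hϱα (comul x)

end HomTwist
end
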